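/- The invariant A₄ of Gauss diagrams, defined as the sum of signs over all subdiagrams isomorphic to the 4-arrow cyclic arrow diagram a₄ (four arrows with 8 endpoints on the circle such that each arrow crosses exactly its two cyclic neighbors, consecutive arrows meeting head-to-tail with tail before head), is additive under connected sum of Gauss diagrams: A₄(G₁ # G₂) = A₄(G₁) + A₄(G₂). -/
import Mathlib


/-!
A combinatorial model of Gauss diagrams of knot diagrams, following
Östlund, "Invariants of knot diagrams and relations among Reidemeister
moves".  Positions on the oriented circle are modeled by natural numbers,
listed in the cyclic order obtained by cutting the circle at a base point
which is not an endpoint of any arrow.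
-/

/-- An arrow of a Gauss diagram: a signed, directed chord of the circle. -/
structure Arrow where
  tail : ℕ
  head : ℕ
  sign : ℤ
deriving DecidableEq

/-- A Gauss diagram: a finite set of signed arrows on the circle. -/
abbrev GaussDiagram := Finset Arrow

/-- The endpoint positions of a Gauss diagram. -/
def endpoints (G : GaussDiagram) : Finset ℕ :=
  G.image Arrow.tail ∪ G.image Arrow.head

/-- The writhe of a Gauss diagram: the sum of the signs of all its arrows. -/
def writhe (G : GaussDiagram) : ℤ := ∑ a ∈ G, a.sign

/-- `x` lies strictly inside the chord of the arrow `a`. -/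
def inArc (a : Arrow) (x : ℕ) : Prop :=
  min a.tail a.head < x ∧ x < max a.tail a.head

/-- Two arrows cross: their endpoints interleave on the circle. -/
def Crosses (a b : Arrow) : Prop := Xor' (inArc a b.tail) (inArc a b.head)

/-- Strict cyclic betweenness: starting at `x` and moving in the positive
direction along the circle one meets `y` strictly before `z`. -/
def CycBtw (x y z : ℕ) : Prop :=
  (x < y ∧ y < z) ∨ (y < z ∧ z < x) ∨ (z < x ∧ x < y)

/-- `x` and `y` are cyclically adjacent among the points of `E`: no point of
`E` lies strictly between them on one of the two arcs joining them. -/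
def AdjacentIn (E : Finset ℕ) (x y : ℕ) : Prop :=
  x ∈ E ∧ y ∈ E ∧ x ≠ y ∧
    ((∀ z ∈ E, z ≤ min x y ∨ max x y ≤ z) ∨ (∀ z ∈ E, min x y ≤ z ∧ z ≤ max x y))

/-- `y` is the immediate cyclic successor of `x` among the points of `E`. -/
def SuccIn (E : Finset ℕ) (x y : ℕ) : Prop :=
  x ∈ E ∧ y ∈ E ∧ x ≠ y ∧
    ((x < y ∧ ∀ z ∈ E, ¬(x < z ∧ z < y)) ∨ (y < x ∧ ∀ z ∈ E, y ≤ z ∧ z ≤ x))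

/-- An arrow is isolated in `G` if its head and tail are adjacent among all
endpoints of `G`. -/
def Isolated (G : GaussDiagram) (a : Arrow) : Prop :=
  AdjacentIn (endpoints G) a.tail a.head

/-- An endpoint selector: the tail or the head of an arrow. -/
def EndSel (u : Arrow → ℕ) : Prop := u = Arrow.tail ∨ u = Arrow.head

/-- `S` matches the abstract pattern `P`: there is a bijection of arrows which
preserves heads/tails and the cyclic order of all endpoints (the signs of the
pattern arrows are ignored). -/
def MatchesPattern (P S : Finset Arrow) : Prop :=
  ∃ f : Arrow → Arrow, Set.BijOn f ↑P ↑S ∧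
    ∀ u v w : Arrow → ℕ, EndSel u → EndSel v → EndSel w →
      ∀ a ∈ P, ∀ b ∈ P, ∀ c ∈ P,
        (CycBtw (u a) (v b) (w c) ↔ CycBtw (u (f a)) (v (f b)) (w (f c)))

/-- The arrow-diagram invariant associated to a pattern `P`: the sum, over all
subdiagrams of `G` matching `P`, of the product of the signs of the arrows of
the subdiagram. -/
noncomputable def patCount (P : Finset Arrow) (G : GaussDiagram) : ℤ := by
  classical
  exact ∑ S ∈ G.powerset.filter (fun S => MatchesPattern P S), ∏ a ∈ S, a.sign

/-- The cyclic pattern `a_n`: `n` arrows arranged cyclically so that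
consecutive arrows cross, meeting head to tail with the tail before the head,
and no other pairs cross. -/
def patternA (n : ℕ) : Finset Arrow :=
  (Finset.range n).image (fun i => ⟨2 * i, (2 * i + 3) % (2 * n), 1⟩)

/-- Orientation reversal of a Gauss diagram. -/
def revDiagram (G : GaussDiagram) : GaussDiagram :=
  G.image (fun a =>
    ⟨(endpoints G).sup id - a.tail, (endpoints G).sup id - a.head, a.sign⟩)

/-- Mirroring: negate the signs of all arrows. -/
def mirror (G : GaussDiagram) : GaussDiagram :=
  G.image (fun a => ⟨a.tail, a.head, -a.sign⟩)

/-- The pattern `d_n`: the orientation reversal of `a_n`. -/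
def patternD (n : ℕ) : Finset Arrow := revDiagram (patternA n)

/-- The pattern `w_n` (`n` odd): `n` pairwise crossing "diameters", directed
so that no two arrow heads are adjacent among the `2n` endpoints. -/
def patternW (n : ℕ) : Finset Arrow :=
  (Finset.range n).image
    (fun i => if i % 2 = 0 then ⟨i + n, i, 1⟩ else ⟨i, i + n, 1⟩)

/-- The knot diagram invariant `A_n`. -/
noncomputable def A (n : ℕ) (G : GaussDiagram) : ℤ := patCount (patternA n) G

/-- The knot diagram invariant `D_n`. -/
noncomputable def D (n : ℕ) (G : GaussDiagram) : ℤ := patCount (patternD n) G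

/-- The knot diagram invariant `W_n` (the weirdness for `n = 3`). -/
noncomputable def W (n : ℕ) (G : GaussDiagram) : ℤ := patCount (patternW n) G

/-- `G` is a connected sum of `G₁` and `G₂`: two points split the circle into
two arcs, every arrow of `G` has both endpoints on one of the arcs, and the
arrows on the two arcs form `G₁` and `G₂` respectively. -/
def IsConnectedSum (G G₁ G₂ : GaussDiagram) : Prop :=
  Disjoint G₁ G₂ ∧ G = G₁ ∪ G₂ ∧
    ∃ c : ℕ, (∀ a ∈ G₁, a.tail < c ∧ a.head < c) ∧
      (∀ a ∈ G₂, c < a.tail ∧ c < a.head)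

/-- A valid crossing sign. -/
def IsSign (s : ℤ) : Prop := s = 1 ∨ s = -1

/-- A positively directed Ω₁-move: adds one isolated arrow of sign `j`. -/
def Omega1Add (G G' : GaussDiagram) (j : ℤ) : Prop :=
  ∃ a : Arrow, a ∉ G ∧ a.tail ≠ a.head ∧ a.sign = j ∧ IsSign j ∧
    G' = insert a G ∧ Isolated G' a

/-- An Ω₁-move (in either direction). -/
def IsOmega1 (G G' : GaussDiagram) : Prop :=
  (∃ j, Omega1Add G G' j) ∨ (∃ j, Omega1Add G' G j)

/-- A positively directed Ω₂-move: adds two arrows of opposite signs whose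
tails are adjacent and whose heads are adjacent on the circle. -/
def Omega2Add (G G' : GaussDiagram) : Prop :=
  ∃ a b : Arrow, a ∉ G ∧ b ∉ G ∧ a ≠ b ∧
    a.tail ≠ a.head ∧ b.tail ≠ b.head ∧
    IsSign a.sign ∧ b.sign = -a.sign ∧
    G' = insert a (insert b G) ∧
    AdjacentIn (endpoints G') a.tail b.tail ∧
    AdjacentIn (endpoints G') a.head b.head

/-- An Ω₂-move (in either direction). -/
def IsOmega2 (G G' : GaussDiagram) : Prop := Omega2Add G G' ∨ Omega2Add G' G

/-- The data of an Ω₃-move on `G`: three mutually crossing arrows of `G`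
whose six endpoints form three sites of two adjacent endpoints each (one site
on each of the three strands of the changing disk), the arrows joining the
three sites pairwise. -/
structure Omega3Data (G : GaussDiagram) where
  a : Arrow
  b : Arrow
  c : Arrow
  q1 : ℕ
  q2 : ℕ
  q3 : ℕ
  q4 : ℕ
  q5 : ℕ
  q6 : ℕ
  ha : a ∈ G
  hb : b ∈ G
  hc : c ∈ G
  hab : a ≠ b
  hac : a ≠ c
  hbc : b ≠ c
  cab : Crosses a b
  cac : Crosses a c
  cbc : Crosses b c
  adj12 : AdjacentIn (endpoints G) q1 q2
  adj34 : AdjacentIn (endpoints G) q3 q4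
  adj56 : AdjacentIn (endpoints G) q5 q6
  ea : ({a.tail, a.head} : Finset ℕ) ⊆ {q1, q2, q3, q4}
  eb : ({b.tail, b.head} : Finset ℕ) ⊆ {q1, q2, q5, q6}
  ec : ({c.tail, c.head} : Finset ℕ) ⊆ {q3, q4, q5, q6}
  hq : ({q1, q2, q3, q4, q5, q6} : Finset ℕ) =
    {a.tail, a.head, b.tail, b.head, c.tail, c.head}

/-- Interchange the two adjacent endpoints at each of the three sites. -/
def swap6 (q1 q2 q3 q4 q5 q6 x : ℕ) : ℕ :=
  if x = q1 then q2 else if x = q2 then q1 else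
  if x = q3 then q4 else if x = q4 then q3 else
  if x = q5 then q6 else if x = q6 then q5 else x

/-- The effect of the Ω₃-move on an arrow. -/
def Omega3Data.mapArrow {G : GaussDiagram} (d : Omega3Data G) (e : Arrow) : Arrow :=
  ⟨swap6 d.q1 d.q2 d.q3 d.q4 d.q5 d.q6 e.tail,
   swap6 d.q1 d.q2 d.q3 d.q4 d.q5 d.q6 e.head, e.sign⟩

/-- The result of the Ω₃-move determined by `d`: the two adjacent endpoints at
each of the three sites are interchanged, all other arrows are unchanged. -/
def Omega3Move (G : GaussDiagram) (d : Omega3Data G) : GaussDiagram :=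
  (G \ {d.a, d.b, d.c}) ∪ {d.mapArrow d.a, d.mapArrow d.b, d.mapArrow d.c}

/-- An Ω₃-move (in either direction). -/
def IsOmega3 (G G' : GaussDiagram) : Prop :=
  (∃ d : Omega3Data G, G' = Omega3Move G d) ∨
  (∃ d : Omega3Data G', G = Omega3Move G' d)

/-- `x` is the position of a tail of one of the three affected arrows. -/
def TailPos {G : GaussDiagram} (d : Omega3Data G) (x : ℕ) : Prop :=
  x = d.a.tail ∨ x = d.b.tail ∨ x = d.c.tail

/-- `x` is the position of a head of one of the three affected arrows. -/
def HeadPos {G : GaussDiagram} (d : Omega3Data G) (x : ℕ) : Prop :=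
  x = d.a.head ∨ x = d.b.head ∨ x = d.c.head

/-- The move determined by `d` has class `Ω₃ᵢⱼₖₘ`: listing the three sites in
the order top, middle, bottom strand (paired each with the opposite arrow,
i.e., the one not meeting that site), the top site carries two tails (two
overcrossings) and the bottom site two heads; `i`, `j`, `k` are the signs of
the crossings between the top–middle, top–bottom and middle–bottom strands
respectively, and `m = 1` iff the move is descending, i.e. the three strands
are visited in the cyclic order top–middle–bottom along the knot. -/
def Omega3Data.IsClass {G : GaussDiagram} (d : Omega3Data G) (i j k m : ℤ) : Prop :=
  (m = 1 ∨ m = -1) ∧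
  ∃ p : Fin 3 → (ℕ × ℕ) × Arrow,
    Set.range p = {((d.q1, d.q2), d.c), ((d.q3, d.q4), d.b), ((d.q5, d.q6), d.a)} ∧
    TailPos d (p 0).1.1 ∧ TailPos d (p 0).1.2 ∧
    HeadPos d (p 2).1.1 ∧ HeadPos d (p 2).1.2 ∧
    (p 2).2.sign = i ∧ (p 1).2.sign = j ∧ (p 0).2.sign = k ∧
    (m = 1 ↔ CycBtw (p 0).1.1 (p 1).1.1 (p 2).1.1)

/-- An Ω₃-move of class `Ω₃ᵢⱼₖₘ` (in either direction; the class of a move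
does not depend on the direction in which it is performed). -/
def IsOmega3Class (i j k m : ℤ) (G G' : GaussDiagram) : Prop :=
  (∃ d : Omega3Data G, G' = Omega3Move G d ∧ d.IsClass i j k m) ∨
  (∃ d : Omega3Data G', G = Omega3Move G' d ∧ d.IsClass i j k m)

/-- A descending Ω₃-move. -/
def IsDescendingOmega3 (G G' : GaussDiagram) : Prop :=
  ∃ i j k, IsOmega3Class i j k 1 G G'

/-- An ascending Ω₃-move. -/
def IsAscendingOmega3 (G G' : GaussDiagram) : Prop :=
  ∃ i j k, IsOmega3Class i j k (-1) G G'

/-- A Reidemeister move of Gauss diagrams. -/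
def RMove (G G' : GaussDiagram) : Prop :=
  IsOmega1 G G' ∨ IsOmega2 G G' ∨ IsOmega3 G G'

/-- If two arrows are separated by `c` (all endpoints of one below `c`, all
endpoints of the other above `c`), the two cyclic-order relations that hold
for a linked pair of the pattern `a₄` cannot both hold. -/
lemma sep_key (c ta ha tb hb : ℕ)
    (hsep : (ta < c ∧ ha < c ∧ c < tb ∧ c < hb) ∨
      (c < ta ∧ c < ha ∧ tb < c ∧ hb < c))
    (h1 : CycBtw ta tb hb) (h2 : CycBtw tb ha hb) : False := by
  unfold CycBtw at h1 h2
  omega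

/-- Membership in a summand propagates along a linked pair of arrows. -/
lemma sep_propagate (G₁ G₂ : GaussDiagram) (c : ℕ)
    (h1 : ∀ a ∈ G₁, a.tail < c ∧ a.head < c)
    (h2 : ∀ a ∈ G₂, c < a.tail ∧ c < a.head)
    (x y : Arrow) (hy : y ∈ G₁ ∪ G₂)
    (hA : CycBtw x.tail y.tail y.head) (hB : CycBtw y.tail x.head y.head) :
    (x ∈ G₁ → y ∈ G₁) ∧ (x ∈ G₂ → y ∈ G₂) := by
  rw [Finset.mem_union] at hy
  constructor
  · intro hx
    rcases hy with h | h
    · exact h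
    · exact absurd hA (fun hA => sep_key c x.tail x.head y.tail y.head
        (Or.inl ⟨(h1 x hx).1, (h1 x hx).2, (h2 y h).1, (h2 y h).2⟩) hA hB)
  · intro hx
    rcases hy with h | h
    · exact absurd hA (fun hA => sep_key c x.tail x.head y.tail y.head
        (Or.inr ⟨(h2 x hx).1, (h2 x hx).2, (h1 y h).1, (h1 y h).2⟩) hA hB)
    · exact h

lemma patternA4_eq :
    patternA 4 = {(⟨0, 3, 1⟩ : Arrow), ⟨2, 5, 1⟩, ⟨4, 7, 1⟩, ⟨6, 1, 1⟩} := by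
  decide

/-- Every subdiagram of a connected sum matching `a₄` lies in one summand. -/
lemma a4_split (G₁ G₂ : GaussDiagram) (c : ℕ)
    (h1 : ∀ a ∈ G₁, a.tail < c ∧ a.head < c)
    (h2 : ∀ a ∈ G₂, c < a.tail ∧ c < a.head)
    (S : Finset Arrow) (hS : S ⊆ G₁ ∪ G₂)
    (hM : MatchesPattern (patternA 4) S) : S ⊆ G₁ ∨ S ⊆ G₂ := by
  obtain ⟨f, hbij, hcyc⟩ := hM
  have hp0 : (⟨0, 3, 1⟩ : Arrow) ∈ patternA 4 := by decide
  have hp1 : (⟨2, 5, 1⟩ : Arrow) ∈ patternA 4 := by decide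
  have hp2 : (⟨4, 7, 1⟩ : Arrow) ∈ patternA 4 := by decide
  have hp3 : (⟨6, 1, 1⟩ : Arrow) ∈ patternA 4 := by decide
  have hm : ∀ p ∈ patternA 4, f p ∈ G₁ ∪ G₂ := fun p hp => hS (hbij.1 hp)
  -- the cyclic-order relations transported along f, for each linked pair
  have edge : ∀ p ∈ patternA 4, ∀ q ∈ patternA 4,
      CycBtw p.tail q.tail q.head → CycBtw q.tail p.head q.head →
      (f p ∈ G₁ → f q ∈ G₁) ∧ (f p ∈ G₂ → f q ∈ G₂) := by
    intro p hp q hq c1 c2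
    have hA := (hcyc Arrow.tail Arrow.tail Arrow.head (Or.inl rfl) (Or.inl rfl)
      (Or.inr rfl) p hp q hq q hq).mp c1
    have hB := (hcyc Arrow.tail Arrow.head Arrow.head (Or.inl rfl) (Or.inr rfl)
      (Or.inr rfl) q hq p hp q hq).mp c2
    exact sep_propagate G₁ G₂ c h1 h2 (f p) (f q) (hm q hq) hA hB
  have e01 := edge _ hp0 _ hp1 (by simp [CycBtw]) (by simp [CycBtw])
  have e12 := edge _ hp1 _ hp2 (by simp [CycBtw]) (by simp [CycBtw])
  have e23 := edge _ hp2 _ hp3 (by simp [CycBtw]) (by simp [CycBtw])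
  have hsub : ∀ x ∈ S, ∃ p ∈ patternA 4, f p = x := by
    intro x hx
    obtain ⟨p, hp, hfp⟩ := hbij.2.2 (Finset.mem_coe.mpr hx)
    exact ⟨p, hp, hfp⟩
  rcases Finset.mem_union.mp (hm _ hp0) with h | h
  · left
    intro x hx
    obtain ⟨p, hp, rfl⟩ := hsub x hx
    rw [patternA4_eq] at hp
    have g1 := e01.1 h
    have g2 := e12.1 g1
    have g3 := e23.1 g2
    simp only [Finset.mem_insert, Finset.mem_singleton] at hp
    rcases hp with rfl | rfl | rfl | rfl
    exacts [h, g1, g2, g3]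
  · right
    intro x hx
    obtain ⟨p, hp, rfl⟩ := hsub x hx
    rw [patternA4_eq] at hp
    have g1 := e01.2 h
    have g2 := e12.2 g1
    have g3 := e23.2 g2
    simp only [Finset.mem_insert, Finset.mem_singleton] at hp
    rcases hp with rfl | rfl | rfl | rfl
    exacts [h, g1, g2, g3]

lemma not_matches_empty : ¬ MatchesPattern (patternA 4) (∅ : Finset Arrow) := by
  rintro ⟨f, hbij, -⟩
  have hp0 : (⟨0, 3, 1⟩ : Arrow) ∈ patternA 4 := by decide
  have := hbij.1 hp0
  simp at this

/-- The invariant `A₄` is additive under the connected sum of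
Gauss diagrams: `A₄(G₁ # G₂) = A₄(G₁) + A₄(G₂)`. -/
theorem A4_additive (G G₁ G₂ : GaussDiagram)
    (h : IsConnectedSum G G₁ G₂) :
    A 4 G = A 4 G₁ + A 4 G₂ := by
  classical
  obtain ⟨hdisj, rfl, c, h1, h2⟩ := h
  simp only [A, patCount]
  have hU : ((G₁ ∪ G₂).powerset.filter fun S => MatchesPattern (patternA 4) S)
      = (G₁.powerset.filter fun S => MatchesPattern (patternA 4) S)
      ∪ (G₂.powerset.filter fun S => MatchesPattern (patternA 4) S) := by
    ext S
    simp only [Finset.mem_filter, Finset.mem_union, Finset.mem_powerset]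
    constructor
    · rintro ⟨hsub, hM⟩
      rcases a4_split G₁ G₂ c h1 h2 S hsub hM with hs | hs
      · exact Or.inl ⟨hs, hM⟩
      · exact Or.inr ⟨hs, hM⟩
    · rintro (⟨hsub, hM⟩ | ⟨hsub, hM⟩)
      · exact ⟨hsub.trans Finset.subset_union_left, hM⟩
      · exact ⟨hsub.trans Finset.subset_union_right, hM⟩
  have hd : Disjoint (G₁.powerset.filter fun S => MatchesPattern (patternA 4) S)
      (G₂.powerset.filter fun S => MatchesPattern (patternA 4) S) := by
    rw [Finset.disjoint_left]
    intro S hS1 hS2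
    simp only [Finset.mem_filter, Finset.mem_powerset] at hS1 hS2
    have hSe : S = ∅ :=
      Finset.subset_empty.mp (le_trans (le_inf hS1.1 hS2.1) hdisj.le_bot)
    exact not_matches_empty (hSe ▸ hS1.2)
  rw [hU, Finset.sum_union hd]
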